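/- arXiv:1908.08208 — 2 statements merged into one kernel-verified Lean document; each statement's English description precedes it below -/
import Mathlib

section
/- For every p in the order interval [u0, v0], the sequence of iterates T^n p converges uniformly on [0,1] to the unique fixed point p* of T in [u0, v0]. -/
open Set Filter

noncomputable def Tmap (c : ℝ → ℝ) (g : ℕ → ℝ) (δ : ℝ) (p : ℝ → ℝ) (s : ℝ) : ℝ :=
  sInf {y : ℝ | ∃ k : ℕ, ∃ t : ℝ, 1 ≤ k ∧ 0 ≤ t ∧ t ≤ s ∧
    y = c (s - t) + g k + δ * k * p (t / k)}

/-!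
Unrolling the infimum defining `T` `n` times, `(Tⁿ q) s` is, up to `ε`, the value of a path:
costs `c (s - t) + g k` that do not involve `q`, plus a terminal term `w * q σ` whose weight
`w ≥ δⁿ` is a product of the factors `δ * k`. Following the same path from any other `r` in the
order interval gives `(Tⁿ r) s ≤ (Tⁿ q) s + w * (c σ - c'(0) σ) + ε`. All costs are nonnegative,
so `w * c'(0) σ ≤ (Tⁿ q) s + ε` is bounded, which forces `σ = O(δ⁻ⁿ)`; as
`c σ - c'(0) σ = o(σ)`, the gap `w * (c σ - c'(0) σ)` tends to `0` uniformly in `s`.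
Applying this to `p, p*` in both orders, with `Tⁿ p* = p*`, gives uniform convergence.
-/

theorem ConvexOn.mul_le_of_hasDerivAt_zero {S : Set ℝ} {f : ℝ → ℝ} {f' x : ℝ}
    (hf : ConvexOn ℝ S f) (h0 : 0 ∈ S) (hf' : HasDerivAt f f' 0) (hf0 : f 0 = 0)
    (hx : x ∈ S) (hx0 : 0 ≤ x) : f' * x ≤ f x := by
  rcases hx0.eq_or_lt with rfl | hx0
  · simp [hf0]
  · have := hf.le_slope_of_hasDerivAt h0 hx hx0 hf'
    rwa [slope_def_field, hf0, sub_zero, sub_zero, le_div_iff₀ hx0] at this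

theorem eventually_mul_sub_le {c : ℝ → ℝ} {a δ : ℝ} (hc : HasDerivAt c a 0) (hc0 : c 0 = 0)
    (ha : 0 < a) (hδ : 1 < δ) (M : ℝ) {η : ℝ} (hη : 0 < η) :
    ∀ᶠ n : ℕ in atTop, ∀ w σ : ℝ, δ ^ n ≤ w → 0 ≤ σ → w * (a * σ) ≤ M →
      w * (c σ - a * σ) ≤ η := by
  set θ := η / (|M| + 1)
  have hθ : 0 < θ * a := by positivity
  obtain ⟨b, hb, hsmall⟩ := Metric.eventually_nhds_iff.1 ((hasDerivAt_iff_isLittleO.1 hc).def hθ)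
  filter_upwards [(tendsto_pow_atTop_atTop_of_one_lt hδ).eventually_gt_atTop (|M| / (a * b))]
    with n hn w σ hw hσ hM
  have hw0 : 0 < w := (pow_pos (by linarith) n).trans_le hw
  have hσb : σ < b := by
    refine lt_of_mul_lt_mul_left ?_ (mul_pos hw0 ha).le
    calc w * a * σ = w * (a * σ) := by ring
      _ ≤ |M| := hM.trans (le_abs_self M)
      _ < w * a * b := by
        rw [mul_assoc]
        exact (div_lt_iff₀ (by positivity)).1 (hn.trans_le hw)
  have hcσ : c σ - a * σ ≤ θ * a * σ := by
    have := @hsmall σ (by rwa [Real.dist_0_eq_abs, abs_of_nonneg hσ])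
    simp only [hc0, sub_zero, smul_eq_mul, Real.norm_eq_abs, abs_of_nonneg hσ] at this
    linarith [le_abs_self (c σ - σ * a)]
  calc w * (c σ - a * σ) ≤ w * (θ * a * σ) := mul_le_mul_of_nonneg_left hcσ hw0.le
    _ = θ * (w * (a * σ)) := by ring
    _ ≤ θ * |M| := mul_le_mul_of_nonneg_left (hM.trans (le_abs_self M)) (by positivity)
    _ ≤ θ * (|M| + 1) := by gcongr; linarith
    _ = η := div_mul_cancel₀ η (by positivity)

/-- The order interval `[u₀, v₀]` with `u₀ s = a * s` and `v₀ = c`. -/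
def InOrderInterval (a : ℝ) (c p : ℝ → ℝ) : Prop :=
  ∀ s ∈ Icc (0 : ℝ) 1, a * s ≤ p s ∧ p s ≤ c s

theorem div_natCast_mem_Icc {k : ℕ} {s t : ℝ} (hk : 1 ≤ k) (ht : 0 ≤ t) (hts : t ≤ s)
    (hs : s ≤ 1) : t / k ∈ Icc (0 : ℝ) 1 :=
  ⟨by positivity, (div_le_self ht (by exact_mod_cast hk)).trans (hts.trans hs)⟩

section Tmap

variable {c : ℝ → ℝ} {g : ℕ → ℝ} {δ a : ℝ} {p q r : ℝ → ℝ}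

theorem Tmap_congr (h : EqOn p q (Icc 0 1)) {s : ℝ} (hs : s ∈ Icc (0 : ℝ) 1) :
    Tmap c g δ p s = Tmap c g δ q s := by
  unfold Tmap
  congr 1
  ext y
  refine exists_congr fun k => exists_congr fun t => and_congr_right fun hk => ?_
  refine and_congr_right fun ht => and_congr_right fun hts => ?_
  rw [h (div_natCast_mem_Icc hk ht hts hs.2)]

theorem iterate_Tmap_eqOn_self (hp : ∀ s ∈ Icc (0 : ℝ) 1, Tmap c g δ p s = p s) (n : ℕ) :
    EqOn ((Tmap c g δ)^[n] p) p (Icc 0 1) := by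
  induction n with
  | zero => exact fun _ _ => rfl
  | succ n ih =>
    intro s hs
    rw [Function.iterate_succ_apply', Tmap_congr ih hs, hp s hs]

theorem mul_le_Tmap_term (ha : 0 ≤ a) (hδ : 1 ≤ δ) (hg : ∀ k : ℕ, 1 ≤ k → 0 ≤ g k)
    (hca : ∀ x ∈ Icc (0 : ℝ) 1, a * x ≤ c x) (hq : ∀ x ∈ Icc (0 : ℝ) 1, a * x ≤ q x)
    {k : ℕ} {s t : ℝ} (hk : 1 ≤ k) (ht : 0 ≤ t) (hts : t ≤ s) (hs : s ≤ 1) :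
    a * s ≤ c (s - t) + g k + δ * k * q (t / k) := by
  have hk' : (1 : ℝ) ≤ k := by exact_mod_cast hk
  have hcost := hca (s - t) ⟨by linarith, by linarith⟩
  have hterm : δ * k * (a * (t / k)) ≤ δ * k * q (t / k) :=
    mul_le_mul_of_nonneg_left (hq _ (div_natCast_mem_Icc hk ht hts hs)) (by positivity)
  have hterm' : δ * k * (a * (t / k)) = δ * (a * t) := by field_simp
  linarith [hg k hk, mul_nonneg (sub_nonneg.2 hδ) (mul_nonneg ha ht)]

theorem Tmap_le (ha : 0 ≤ a) (hδ : 1 ≤ δ) (hg : ∀ k : ℕ, 1 ≤ k → 0 ≤ g k)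
    (hca : ∀ x ∈ Icc (0 : ℝ) 1, a * x ≤ c x) (hq : ∀ x ∈ Icc (0 : ℝ) 1, a * x ≤ q x)
    {k : ℕ} {s t : ℝ} (hk : 1 ≤ k) (ht : 0 ≤ t) (hts : t ≤ s) (hs : s ≤ 1) :
    Tmap c g δ q s ≤ c (s - t) + g k + δ * k * q (t / k) := by
  refine csInf_le ⟨a * s, ?_⟩ ⟨k, t, hk, ht, hts, rfl⟩
  rintro _ ⟨k', t', hk', ht', hts', rfl⟩
  exact mul_le_Tmap_term ha hδ hg hca hq hk' ht' hts' hs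

theorem mul_le_Tmap (ha : 0 ≤ a) (hδ : 1 ≤ δ) (hg : ∀ k : ℕ, 1 ≤ k → 0 ≤ g k)
    (hca : ∀ x ∈ Icc (0 : ℝ) 1, a * x ≤ c x) (hq : ∀ x ∈ Icc (0 : ℝ) 1, a * x ≤ q x)
    {s : ℝ} (hs : s ∈ Icc (0 : ℝ) 1) : a * s ≤ Tmap c g δ q s := by
  refine le_csInf ⟨_, 1, 0, le_rfl, le_rfl, hs.1, rfl⟩ ?_
  rintro _ ⟨k, t, hk, ht, hts, rfl⟩
  exact mul_le_Tmap_term ha hδ hg hca hq hk ht hts hs.2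

theorem exists_lt_Tmap_add {s ε : ℝ} (hs : 0 ≤ s) (hε : 0 < ε) :
    ∃ k : ℕ, ∃ t : ℝ, 1 ≤ k ∧ 0 ≤ t ∧ t ≤ s ∧
      c (s - t) + g k + δ * k * q (t / k) < Tmap c g δ q s + ε := by
  by_contra! h
  have : Tmap c g δ q s + ε ≤ Tmap c g δ q s := by
    refine le_csInf ⟨_, 1, 0, le_rfl, le_rfl, hs, rfl⟩ ?_
    rintro _ ⟨k, t, hk, ht, hts, rfl⟩
    exact h k t hk ht hts
  linarith

theorem inOrderInterval_Tmap (ha : 0 ≤ a) (hδ : 1 ≤ δ) (hg : ∀ k : ℕ, 1 ≤ k → 0 ≤ g k)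
    (hca : ∀ x ∈ Icc (0 : ℝ) 1, a * x ≤ c x) (hc0 : c 0 = 0) (hg1 : g 1 = 0)
    (hq : InOrderInterval a c q) : InOrderInterval a c (Tmap c g δ q) := by
  intro s hs
  have hq0 : q 0 = 0 := by
    have := hq 0 (left_mem_Icc.2 zero_le_one)
    rw [hc0, mul_zero] at this
    exact le_antisymm this.2 this.1
  refine ⟨mul_le_Tmap ha hδ hg hca (fun x hx => (hq x hx).1) hs, ?_⟩
  simpa [hq0, hg1] using
    Tmap_le ha hδ hg hca (fun x hx => (hq x hx).1) le_rfl le_rfl hs.1 hs.2 (q := q) (g := g)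

theorem inOrderInterval_iterate_Tmap (ha : 0 ≤ a) (hδ : 1 ≤ δ)
    (hg : ∀ k : ℕ, 1 ≤ k → 0 ≤ g k) (hca : ∀ x ∈ Icc (0 : ℝ) 1, a * x ≤ c x) (hc0 : c 0 = 0)
    (hg1 : g 1 = 0) (hq : InOrderInterval a c q) (n : ℕ) :
    InOrderInterval a c ((Tmap c g δ)^[n] q) := by
  induction n with
  | zero => exact hq
  | succ n ih =>
    rw [Function.iterate_succ_apply']
    exact inOrderInterval_Tmap ha hδ hg hca hc0 hg1 ih

/-- `w` and `σ` are the accumulated weight `∏ δ * k` and the terminal point of an `ε`-optimal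
path through the infima defining `Tⁿ q`. -/
theorem exists_weight_iterate_Tmap (ha : 0 ≤ a) (hδ : 1 ≤ δ) (hg : ∀ k : ℕ, 1 ≤ k → 0 ≤ g k)
    (hca : ∀ x ∈ Icc (0 : ℝ) 1, a * x ≤ c x) (hc0 : c 0 = 0) (hg1 : g 1 = 0)
    (hq : InOrderInterval a c q) (n : ℕ) {s ε : ℝ} (hs : s ∈ Icc (0 : ℝ) 1) (hε : 0 < ε) :
    ∃ w σ : ℝ, δ ^ n ≤ w ∧ σ ∈ Icc (0 : ℝ) 1 ∧ w * (a * σ) ≤ (Tmap c g δ)^[n] q s + ε ∧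
      ∀ r, InOrderInterval a c r →
        (Tmap c g δ)^[n] r s ≤ (Tmap c g δ)^[n] q s + w * (c σ - a * σ) + ε := by
  induction n generalizing s ε with
  | zero =>
    refine ⟨1, s, (pow_zero δ).le, hs, ?_, fun r hr => ?_⟩
    · simp only [one_mul, Function.iterate_zero, id_eq]
      linarith [(hq s hs).1]
    · simp only [one_mul, Function.iterate_zero, id_eq]
      linarith [(hr s hs).2, (hq s hs).1]
  | succ n ih =>
    obtain ⟨k, t, hk, ht, hts, hlt⟩ :=
      exists_lt_Tmap_add (c := c) (g := g) (δ := δ) (q := (Tmap c g δ)^[n] q) hs.1 (half_pos hε)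
    have hk' : (1 : ℝ) ≤ k := by exact_mod_cast hk
    have hδk : 0 < δ * k := by positivity
    obtain ⟨w, σ, hw, hσ, hbudget, hcompare⟩ :=
      ih (div_natCast_mem_Icc hk ht hts hs.2) (div_pos (half_pos hε) hδk)
    have hslack : δ * k * (ε / 2 / (δ * k)) = ε / 2 := by field_simp
    have hcost : 0 ≤ c (s - t) + g k := by
      have := hca (s - t) ⟨by linarith, by linarith [hs.2]⟩
      linarith [hg k hk, mul_nonneg ha (sub_nonneg.2 hts)]
    refine ⟨δ * k * w, σ, ?_, hσ, ?_, fun r hr => ?_⟩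
    · rw [pow_succ']
      exact mul_le_mul (le_mul_of_one_le_right (by linarith) hk') hw (by positivity) hδk.le
    · have := mul_le_mul_of_nonneg_left hbudget hδk.le
      rw [Function.iterate_succ_apply']
      linarith
    · have hstep := Tmap_le ha hδ hg hca (fun x hx => (inOrderInterval_iterate_Tmap ha hδ hg hca
        hc0 hg1 hr n x hx).1) hk ht hts hs.2
      have := mul_le_mul_of_nonneg_left (hcompare r hr) hδk.le
      rw [Function.iterate_succ_apply', Function.iterate_succ_apply']
      linarith

theorem eventually_iterate_Tmap_lt_add {M η : ℝ}
    (hc : HasDerivAt c a 0) (hc0 : c 0 = 0) (ha : 0 < a)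
    (hca : ∀ x ∈ Icc (0 : ℝ) 1, a * x ≤ c x) (hcM : ∀ x ∈ Icc (0 : ℝ) 1, c x ≤ M)
    (hg1 : g 1 = 0) (hg : ∀ k : ℕ, 1 ≤ k → 0 ≤ g k) (hδ : 1 < δ)
    (hq : InOrderInterval a c q) (hr : InOrderInterval a c r) (hη : 0 < η) :
    ∀ᶠ n : ℕ in atTop, ∀ s ∈ Icc (0 : ℝ) 1,
      (Tmap c g δ)^[n] r s < (Tmap c g δ)^[n] q s + η := by
  filter_upwards [eventually_mul_sub_le hc hc0 ha hδ (M + η / 4) (half_pos hη)] with n hn s hs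
  obtain ⟨w, σ, hw, hσ, hbudget, hcompare⟩ :=
    exists_weight_iterate_Tmap ha.le hδ.le hg hca hc0 hg1 hq n hs (by positivity : 0 < η / 4)
  have hqn := (inOrderInterval_iterate_Tmap ha.le hδ.le hg hca hc0 hg1 hq n s hs).2
  have hgap := hn w σ hw hσ.1 (by linarith [hcM s hs])
  linarith [hcompare r hr]

end Tmap

theorem iterates_converge_uniformly_general (c : ℝ → ℝ) (g : ℕ → ℝ) (δ : ℝ)
    (hc_conv : StrictConvexOn ℝ (Set.Icc 0 1) c)
    (hc0 : c 0 = 0) (hc'0 : 0 < deriv c 0)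
    (hg1 : g 1 = 0) (hg_nonneg : ∀ k : ℕ, 1 ≤ k → 0 ≤ g k)
    (hδ : 1 < δ)
    (pstar : ℝ → ℝ)
    (hp_mem : ∀ s ∈ Set.Icc (0 : ℝ) 1, deriv c 0 * s ≤ pstar s ∧ pstar s ≤ c s)
    (hp_fix : ∀ s ∈ Set.Icc (0 : ℝ) 1, Tmap c g δ pstar s = pstar s) :
    ∀ p : ℝ → ℝ, ContinuousOn p (Set.Icc 0 1) →
      (∀ s ∈ Set.Icc (0 : ℝ) 1, deriv c 0 * s ≤ p s ∧ p s ≤ c s) →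
      TendstoUniformlyOn (fun n : ℕ => (Tmap c g δ)^[n] p) pstar atTop (Set.Icc 0 1) := by
  intro p _ hp
  have hc : HasDerivAt c (deriv c 0) 0 := (differentiableAt_of_deriv_ne_zero hc'0.ne').hasDerivAt
  have h0 : (0 : ℝ) ∈ Icc (0 : ℝ) 1 := left_mem_Icc.2 zero_le_one
  have hca : ∀ x ∈ Icc (0 : ℝ) 1, deriv c 0 * x ≤ c x := fun x hx =>
    hc_conv.convexOn.mul_le_of_hasDerivAt_zero h0 hc hc0 hx hx.1
  have hcM : ∀ x ∈ Icc (0 : ℝ) 1, c x ≤ max (c 0) (c 1) := fun x hx =>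
    hc_conv.convexOn.le_on_segment h0 (right_mem_Icc.2 zero_le_one)
      (segment_eq_Icc (zero_le_one : (0 : ℝ) ≤ 1) ▸ hx)
  rw [Metric.tendstoUniformlyOn_iff]
  intro η hη
  filter_upwards [eventually_iterate_Tmap_lt_add hc hc0 hc'0 hca hcM hg1 hg_nonneg hδ hp_mem hp hη,
    eventually_iterate_Tmap_lt_add hc hc0 hc'0 hca hcM hg1 hg_nonneg hδ hp hp_mem hη]
    with n hp_lt hstar_lt x hx
  have hfix := iterate_Tmap_eqOn_self hp_fix n hx
  rw [Real.dist_eq, abs_sub_lt_iff]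
  constructor <;> linarith [hp_lt x hx, hstar_lt x hx]

theorem iterates_converge_uniformly (c : ℝ → ℝ) (g : ℕ → ℝ) (δ : ℝ)
(hc_diff : DifferentiableOn ℝ c (Set.Icc 0 1))
    (hc_mono : StrictMonoOn c (Set.Icc 0 1))
    (hc_conv : StrictConvexOn ℝ (Set.Icc 0 1) c)
    (hc0 : c 0 = 0) (hc'0 : 0 < deriv c 0)
    (hg_mono : StrictMonoOn g {k : ℕ | 1 ≤ k})
    (hg1 : g 1 = 0) (hg_nonneg : ∀ k : ℕ, 1 ≤ k → 0 ≤ g k)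
    (hg_top : Tendsto g atTop atTop)
    (hδ : 1 < δ)
    (pstar : ℝ → ℝ)
    (hp_cont : ContinuousOn pstar (Set.Icc 0 1))
    (hp_mem : ∀ s ∈ Set.Icc (0 : ℝ) 1, deriv c 0 * s ≤ pstar s ∧ pstar s ≤ c s)
    (hp_fix : ∀ s ∈ Set.Icc (0 : ℝ) 1, Tmap c g δ pstar s = pstar s) :
    ∀ p : ℝ → ℝ, ContinuousOn p (Set.Icc 0 1) →
      (∀ s ∈ Set.Icc (0 : ℝ) 1, deriv c 0 * s ≤ p s ∧ p s ≤ c s) →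
      TendstoUniformlyOn (fun n : ℕ => (Tmap c g δ)^[n] p) pstar atTop (Set.Icc 0 1) :=
  iterates_converge_uniformly_general c g δ hc_conv hc0 hc'0 hg1 hg_nonneg hδ pstar hp_mem hp_fix
end

section
/- There exists ε ∈ (0,1) such that (T u0)(s) ≥ u0(s) + ε·(v0(s) − u0(s)) for all s ∈ [0,1], where u0(s) = (deriv c 0)·s and v0(s) = c(s). -/
/-!
With `a = c'(0)` and `L` the derivative of `c` at `1` within `[0,1]`, convexity gives two lower
bounds for `c (s - t)`: the tangent line `a (s - t)` and the chord bound `c s - L t`. Their average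
with weights `1 - ε` and `ε` is `a s + ε (c s - a s) - t (a + ε (L - a))`, and the term
`δ k u0 (t / k) = δ a t` of every candidate in the infimum defining `T u0 s` makes up the deficit
as soon as `ε (L - a) ≤ (δ - 1) a`.
-/

open Set Filter

theorem ConvexOn.add_deriv_mul_sub_le {S : Set ℝ} {f : ℝ → ℝ} {a x : ℝ} (hf : ConvexOn ℝ S f)
    (ha : a ∈ S) (hx : x ∈ S) (hax : a ≤ x) (hd : DifferentiableAt ℝ f a) :
    f a + deriv f a * (x - a) ≤ f x := by
  rcases hax.eq_or_lt with rfl | hax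
  · simp
  have hslope := hf.deriv_le_slope ha hx hax hd
  rw [slope_def_field, le_div_iff₀ (sub_pos.2 hax)] at hslope
  linarith

theorem ConvexOn.sub_le_derivWithin_mul_sub {S : Set ℝ} {f : ℝ → ℝ} {x y b : ℝ}
    (hf : ConvexOn ℝ S f) (hx : x ∈ S) (hb : b ∈ S) (hxy : x ≤ y) (hyb : y ≤ b)
    (hd : DifferentiableWithinAt ℝ f S b) :
    f y - f x ≤ derivWithin f S b * (y - x) := by
  rcases hxy.eq_or_lt with rfl | hxy
  · simp
  have hy : y ∈ S := hf.1.ordConnected.out hx hb ⟨hxy.le, hyb⟩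
  have hslope : slope f x y ≤ derivWithin f S b :=
    calc slope f x y ≤ slope f x b :=
          hf.slope_mono hx ⟨hy, hxy.ne'⟩ ⟨hb, (hxy.trans_le hyb).ne'⟩ hyb
      _ ≤ derivWithin f S b := hf.slope_le_derivWithin hx hb (hxy.trans_le hyb) hd
  rwa [slope_def_field, div_le_iff₀ (sub_pos.2 hxy)] at hslope

theorem exists_mem_Ioo_zero_one_mul_le {K : ℝ} (hK : 0 < K) (L : ℝ) :
    ∃ ε ∈ Ioo (0 : ℝ) 1, ε * L ≤ K := by
  have hM : 0 < K + |L| + 1 := by positivity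
  refine ⟨K / (K + |L| + 1), ⟨by positivity, (div_lt_one hM).2 (by linarith [abs_nonneg L])⟩, ?_⟩
  calc K / (K + |L| + 1) * L ≤ K / (K + |L| + 1) * (K + |L| + 1) := by
        gcongr
        linarith [le_abs_self L]
    _ = K := div_mul_cancel₀ K hM.ne'

theorem le_Tmap {c : ℝ → ℝ} {g : ℕ → ℝ} {δ : ℝ} {p : ℝ → ℝ} {s B : ℝ} (hs : 0 ≤ s)
    (hB : ∀ k : ℕ, ∀ t : ℝ, 1 ≤ k → 0 ≤ t → t ≤ s →
      B ≤ c (s - t) + g k + δ * k * p (t / k)) :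
    B ≤ Tmap c g δ p s :=
  le_csInf ⟨_, 1, 0, le_rfl, le_rfl, hs, rfl⟩ <| by
    rintro _ ⟨k, t, hk, ht0, hts, rfl⟩
    exact hB k t hk ht0 hts

theorem Tmap_u0_ge_general (c : ℝ → ℝ) (g : ℕ → ℝ) (δ : ℝ)
(hc_diff : DifferentiableOn ℝ c (Set.Icc 0 1))
    (hc_conv : StrictConvexOn ℝ (Set.Icc 0 1) c)
    (hc0 : c 0 = 0) (hc'0 : 0 < deriv c 0)
    (hg_nonneg : ∀ k : ℕ, 1 ≤ k → 0 ≤ g k)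
    (hδ : 1 < δ) :
    ∃ ε : ℝ, 0 < ε ∧ ε < 1 ∧
      ∀ s ∈ Set.Icc (0 : ℝ) 1,
        deriv c 0 * s + ε * (c s - deriv c 0 * s) ≤
          Tmap c g δ (fun x => deriv c 0 * x) s := by
  set a := deriv c 0
  set L := derivWithin c (Icc 0 1) 1
  have h0 : (0 : ℝ) ∈ Icc 0 1 := left_mem_Icc.2 zero_le_one
  have h1 : (1 : ℝ) ∈ Icc 0 1 := right_mem_Icc.2 zero_le_one
  obtain ⟨ε, ⟨hε0, hε1⟩, hεL⟩ :=
    exists_mem_Ioo_zero_one_mul_le (mul_pos (sub_pos.2 hδ) hc'0) (L - a)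
  refine ⟨ε, hε0, hε1, fun s hs => le_Tmap hs.1 fun k t hk ht0 hts => ?_⟩
  have hst : s - t ∈ Icc (0 : ℝ) 1 := ⟨by linarith, by linarith [hs.2]⟩
  have htangent : a * (s - t) ≤ c (s - t) := by
    simpa [hc0] using hc_conv.convexOn.add_deriv_mul_sub_le h0 hst hst.1
      (differentiableAt_of_deriv_ne_zero hc'0.ne')
  have hchord : c s - c (s - t) ≤ L * t := by
    simpa using hc_conv.convexOn.sub_le_derivWithin_mul_sub hst h1 (by linarith) hs.2
      (hc_diff 1 h1)
  have hlinear : δ * k * (a * (t / k)) = δ * a * t := by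
    have : (k : ℝ) ≠ 0 := by positivity
    field_simp
  rw [hlinear]
  nlinarith [mul_le_mul_of_nonneg_left htangent (sub_nonneg.2 hε1.le),
    mul_le_mul_of_nonneg_left hchord hε0.le, mul_le_mul_of_nonneg_left hεL ht0, hg_nonneg k hk]

theorem Tmap_u0_ge (c : ℝ → ℝ) (g : ℕ → ℝ) (δ : ℝ)
(hc_diff : DifferentiableOn ℝ c (Set.Icc 0 1))
    (hc_mono : StrictMonoOn c (Set.Icc 0 1))
    (hc_conv : StrictConvexOn ℝ (Set.Icc 0 1) c)
    (hc0 : c 0 = 0) (hc'0 : 0 < deriv c 0)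
    (hg_mono : StrictMonoOn g {k : ℕ | 1 ≤ k})
    (hg1 : g 1 = 0) (hg_nonneg : ∀ k : ℕ, 1 ≤ k → 0 ≤ g k)
    (hg_top : Tendsto g atTop atTop)
    (hδ : 1 < δ) :
    ∃ ε : ℝ, 0 < ε ∧ ε < 1 ∧
      ∀ s ∈ Set.Icc (0 : ℝ) 1,
        deriv c 0 * s + ε * (c s - deriv c 0 * s) ≤
          Tmap c g δ (fun x => deriv c 0 * x) s :=
  Tmap_u0_ge_general c g δ hc_diff hc_conv hc0 hc'0 hg_nonneg hδ
end
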